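/- arXiv:2503.18453 — 2 statements merged into one kernel-verified Lean document; each statement's English description precedes it below -/
import Mathlib

section
/- For all integers 2 ≤ k ≤ N, the quantity a_k(N) satisfies the recursion a_k(N) = (2(k−1)/(N(N−k+1)))·a_{k−1}(N) + ((k−1)/(N²(N−k+1)))·a_{k−2}(N). -/
/-! With `c l = N ^ l / (N)_l`, one has `N ^ k * a_k(N) = Δ^k c (0)`, the `k`-th forward
difference at `0`. The sequence `c` satisfies `N * Δc (l) = l * c (l + 1)` for `l < N`; applying
`Δ^(k-1)` and the Leibniz rule for multiplication by `l` gives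
`N * Δ^k c (0) = (k - 1) * Δ^(k-2) c (2)`, and expanding the shift by two in forward
differences, `Δ^(k-2) c (2) = Δ^(k-2) c (0) + 2 Δ^(k-1) c (0) + Δ^k c (0)`,
yields the three-term recursion. -/

open Finset

noncomputable section

namespace WgPerm

/-- Number of blocks of the partition of `α` corresponding to the setoid `s`. -/
def numBlocks {α : Type*} (s : Setoid α) : ℕ := Nat.card (Quotient s)

/-- Number of blocks of `s` contained in the block `B` of `t` (meaningful when `s ≤ t`). -/
def lam {α : Type*} (s t : Setoid α) (B : Quotient t) : ℕ :=
  Nat.card {c : Quotient s // Quotient.mk t (Quotient.out c) = B}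

/-- Möbius function of the partition lattice:
`μ(s,t) = ∏_B (−1)^{λ_B−1} (λ_B−1)!` over the blocks `B` of `t`. -/
def mobius {α : Type*} (s t : Setoid α) : ℤ :=
  ∏ᶠ B : Quotient t, (-1 : ℤ) ^ (lam s t B - 1) * (Nat.factorial (lam s t B - 1) : ℤ)

/-- Kernel partition `Π_i` of a tuple `i`. -/
def kerP {k N : ℕ} (i : Fin k → Fin N) : Setoid (Fin k) := Setoid.ker i

/-- `(i,j)` entry of the permutation matrix of `g`. -/
def permEntry {N : ℕ} (g : Equiv.Perm (Fin N)) (i j : Fin N) : ℝ :=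
  if g i = j then 1 else 0

/-- The Weingarten function for the symmetric group `S_N`. -/
def Wg (k N : ℕ) (σ τ : Setoid (Fin k)) : ℝ :=
  ∑ᶠ π ∈ {π : Setoid (Fin k) | π ≤ σ ⊓ τ},
    ((mobius π σ * mobius π τ : ℤ) : ℝ) / (Nat.descFactorial N (numBlocks π) : ℝ)

/-- `|D(π)|`: the number of singleton blocks of `π`. -/
def numSingletons {k : ℕ} (π : Setoid (Fin k)) : ℕ :=
  Nat.card {j : Fin k | ∀ m, π j m → m = j}

/-- The centered Weingarten function for the symmetric group `S_N`. -/
def cWg (k N : ℕ) (σ τ : Setoid (Fin k)) : ℝ :=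
  ∑ i ∈ Finset.range (numSingletons (σ ⊔ τ) + 1),
    ((numSingletons (σ ⊔ τ)).choose i : ℝ) * (-1 : ℝ) ^ i *
      ∑ᶠ π ∈ {π : Setoid (Fin k) | π ≤ σ ⊓ τ},
        ((mobius π σ * mobius π τ : ℤ) : ℝ) * ((N : ℝ) ^ i)⁻¹
          / (Nat.descFactorial N (numBlocks π - i) : ℝ)

/-- `a_k(N) = Σ_{l=0}^{k} binom(k,l)·(−N)^{−(k−l)}/(N)_l`. -/
def aSeq (k N : ℕ) : ℝ :=
  ∑ l ∈ Finset.range (k + 1),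
    (k.choose l : ℝ) * ((-(N : ℝ)) ^ (k - l))⁻¹ / (Nat.descFactorial N l : ℝ)

end WgPerm

open fwdDiff

section
variable {M G : Type*} [AddCommMonoid M] [AddCommGroup G]

theorem fwdDiff_iter_congr {f g : M → G} {h y : M} {n : ℕ}
    (hfg : ∀ l ≤ n, f (y + l • h) = g (y + l • h)) : Δ_[h] ^[n] f y = Δ_[h] ^[n] g y := by
  simp only [fwdDiff_iter_eq_sum_shift]
  refine sum_congr rfl fun l hl => ?_
  rw [hfg l (Nat.lt_succ_iff.mp (mem_range.mp hl))]

theorem fwdDiff_iter_add_two {f : M → G} {h : M} (n : ℕ) (y : M) :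
    Δ_[h] ^[n] f (y + 2 • h) =
      Δ_[h] ^[n] f y + 2 • Δ_[h] ^[n + 1] f y + Δ_[h] ^[n + 2] f y := by
  rw [shift_eq_sum_fwdDiff_iter h (Δ_[h] ^[n] f) 2 y]
  simp only [sum_range_succ, sum_range_zero, ← Function.iterate_add_apply, zero_add,
    Nat.choose_zero_right, Nat.choose_one_right, Nat.choose_self, one_smul, add_comm _ n, add_zero]

end

theorem fwdDiff_iter_succ_natCast_mul {R : Type*} [Ring R] (f : ℕ → R) (n : ℕ) :
    Δ_[1] ^[n + 1] (fun x : ℕ => (x : R) * f x) =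
      fun y : ℕ => (y : R) * Δ_[1] ^[n + 1] f y + (n + 1) * Δ_[1] ^[n] f (y + 1) := by
  induction n with
  | zero =>
    ext y
    simp only [zero_add, Nat.cast_zero, one_mul, Function.iterate_one, Function.iterate_zero_apply,
      fwdDiff]
    push_cast
    noncomm_ring
  | succ n ih =>
    rw [Function.iterate_succ_apply', ih]
    ext y
    simp only [fwdDiff, Function.iterate_succ_apply']
    push_cast
    noncomm_ring

namespace WgPerm

def powDivDescFactorial (N l : ℕ) : ℝ := (N : ℝ) ^ l / N.descFactorial l

theorem natCast_mul_fwdDiff_powDivDescFactorial {N l : ℕ} (hl : l < N) :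
    (N : ℝ) * Δ_[1] (powDivDescFactorial N) l = l * powDivDescFactorial N (l + 1) := by
  have hD : (N.descFactorial l : ℝ) ≠ 0 := by
    exact_mod_cast (Nat.descFactorial_pos.mpr hl.le).ne'
  have hNl : (N : ℝ) - l ≠ 0 := sub_ne_zero.mpr (by exact_mod_cast hl.ne')
  simp only [fwdDiff, powDivDescFactorial, Nat.descFactorial_succ, Nat.cast_mul,
    Nat.cast_sub hl.le]
  field_simp
  ring

theorem sub_mul_fwdDiff_iter_powDivDescFactorial {N m : ℕ} (h : m + 2 ≤ N) :
    ((N : ℝ) - (m + 1)) * Δ_[1] ^[m + 2] (powDivDescFactorial N) 0 =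
      (m + 1) * (Δ_[1] ^[m] (powDivDescFactorial N) 0 +
        2 * Δ_[1] ^[m + 1] (powDivDescFactorial N) 0) := by
  set c := powDivDescFactorial N
  have hN : (N : ℝ) * Δ_[1] ^[m + 2] c 0 = (m + 1) * Δ_[1] ^[m] c 2 :=
    calc (N : ℝ) * Δ_[1] ^[m + 2] c 0
        = Δ_[1] ^[m + 1] ((N : ℝ) • Δ_[1] c) 0 := by
          rw [fwdDiff_iter_const_smul, Function.iterate_succ_apply]; rfl
      _ = Δ_[1] ^[m + 1] (fun l : ℕ => (l : ℝ) * c (l + 1)) 0 :=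
          fwdDiff_iter_congr fun l hl =>
            natCast_mul_fwdDiff_powDivDescFactorial <| by
              rw [zero_add, smul_eq_mul, mul_one]; omega
      _ = (m + 1) * Δ_[1] ^[m] c 2 := by
          rw [fwdDiff_iter_succ_natCast_mul]
          simp only [Nat.cast_zero, zero_mul, zero_add, fwdDiff_iter_comp_add]
  have hshift := fwdDiff_iter_add_two (f := c) (h := 1) m 0
  simp only [zero_add, smul_eq_mul, mul_one, nsmul_eq_mul, Nat.cast_ofNat] at hshift
  rw [hshift] at hN
  linear_combination hN

theorem aSeq_eq_fwdDiff_iter_div {N : ℕ} (hN : N ≠ 0) (k : ℕ) :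
    aSeq k N = Δ_[1] ^[k] (powDivDescFactorial N) 0 / (N : ℝ) ^ k := by
  rw [aSeq, fwdDiff_iter_eq_sum_shift, sum_div]
  refine sum_congr rfl fun l hl => ?_
  have hpow : (N : ℝ) ^ k = N ^ (k - l) * N ^ l := by
    rw [← pow_add, Nat.sub_add_cancel (Nat.lt_succ_iff.mp (mem_range.mp hl))]
  have hN' : (N : ℝ) ≠ 0 := by exact_mod_cast hN
  rw [zero_add, smul_eq_mul, mul_one, zsmul_eq_mul, powDivDescFactorial, neg_pow, mul_inv,
    ← inv_pow, inv_neg_one, hpow]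
  push_cast
  field_simp

/-- recursion for `a_k(N)`. -/
theorem stmt8 (k N : ℕ) (h2 : 2 ≤ k) (hkN : k ≤ N) :
    aSeq k N =
      2 * ((k : ℝ) - 1) / ((N : ℝ) * ((N : ℝ) - (k : ℝ) + 1)) * aSeq (k - 1) N +
        ((k : ℝ) - 1) / ((N : ℝ) ^ 2 * ((N : ℝ) - (k : ℝ) + 1)) * aSeq (k - 2) N := by
  obtain ⟨m, rfl⟩ : ∃ m, k = m + 2 := ⟨k - 2, by omega⟩
  have hN : N ≠ 0 := by omega
  have hgap : (N : ℝ) - (m + 2 : ℕ) + 1 ≠ 0 := by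
    have : ((m + 2 : ℕ) : ℝ) ≤ N := by exact_mod_cast hkN
    linarith
  have hrec := sub_mul_fwdDiff_iter_powDivDescFactorial hkN
  simp only [Nat.add_sub_cancel, aSeq_eq_fwdDiff_iter_div hN]
  push_cast at hgap ⊢
  field_simp
  linear_combination ((N : ℝ) ^ 2 * N ^ (m + 1) * N ^ m) * hrec

end WgPerm

end
end

section
/- Fix an integer k ≥ 1 and σ,τ ∈ P(k), and set d = |D(σ∨τ)|. If d is even and d ≠ k, then N^{#(σ∧τ)+d/2}·W̊g_k(σ,τ,N) converges, as N → ∞, to μ(σ∧τ,σ)·μ(σ∧τ,τ)·(d−1)!!, where (2m−1)!! = ∏_{j=1}^{m}(2j−1) and (−1)!! = 1. -/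
open Finset

noncomputable section

namespace WgPerm

/-!
Fix `π ≤ σ ⊓ τ` with `b = #π` blocks and put `x = 1/N`. Since
`(N)_b = (N)_{b-i} N^i ∏_{j<i} (1 - (b-1-j)x)`, the part of `W̊g_k` indexed by `π` is
`μ(π,σ) μ(π,τ) x^b S_d(x) / ∏_{j<b} (1 - (b-1-j)x)`, where
`S_d(x) = Σ_i (-1)^i C(d,i) ∏_{j<i} (1 - (b-1-j)x)` is a `d`-th forward difference. Differencing the product gives the recurrence
`S_{d+2} = (d+1) x S_d + (b-d-2) x S_{d+1}`, so `S_{2m}(x) = x^m p(x)` with `p(0) = (2m-1)!!`.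
Multiplied by `N^{#(σ∧τ)+m}`, the summand becomes `x^{b-#(σ∧τ)} p(x) (1 + O(x))`: it tends to
`(2m-1)!!` times its Möbius weight when `π = σ ∧ τ` and to `0` otherwise. The bound `d ≤ b`
needed along the way holds because `d = |D(σ∨τ)| ≤ |D(π)| ≤ #π`.
-/

open Filter Topology

section AltBinomSum

variable {R : Type*} [CommRing R]

/-- `(-1)^e Δ^e g 0`, written out. -/
def altBinomSum (e : ℕ) (g : ℕ → R) : R :=
  ∑ i ∈ range (e + 1), (e.choose i : R) * ((-1) ^ i * g i)

lemma altBinomSum_sub (e : ℕ) (f g : ℕ → R) :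
    altBinomSum e (fun i => f i - g i) = altBinomSum e f - altBinomSum e g := by
  simp only [altBinomSum, mul_sub, sum_sub_distrib]

lemma altBinomSum_mul_left (e : ℕ) (a : R) (g : ℕ → R) :
    altBinomSum e (fun i => a * g i) = a * altBinomSum e g := by
  simp only [altBinomSum, mul_sum]
  exact sum_congr rfl fun _ _ => by ring

lemma altBinomSum_succ (e : ℕ) (g : ℕ → R) :
    altBinomSum (e + 1) g = altBinomSum e (fun i => g i - g (i + 1)) := by
  rw [altBinomSum, sum_choose_succ_mul (fun i _ => (-1) ^ i * g i), altBinomSum_sub,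
    altBinomSum, altBinomSum, sub_eq_add_neg, ← sum_neg_distrib]
  congr 1
  exact sum_congr rfl fun _ _ => by ring

lemma altBinomSum_succ_natCast_mul (e : ℕ) (g : ℕ → R) :
    altBinomSum (e + 1) (fun i => (i : R) * g i)
      = -((e : R) + 1) * altBinomSum e (fun i => g (i + 1)) := by
  rw [altBinomSum, sum_range_succ', altBinomSum, mul_sum]
  simp only [Nat.cast_zero, zero_mul, mul_zero, add_zero]
  refine sum_congr rfl fun i _ => ?_
  have h := congrArg (fun n : ℕ => (n : R)) (Nat.add_one_mul_choose_eq e i)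
  push_cast at h ⊢
  linear_combination (-1) ^ i * g (i + 1) * h

end AltBinomSum

section CenteredSum

variable {R : Type*} [CommRing R]

/-- At `x = 1/N` this is `(N)_b / (N^i (N)_{b-i})`. -/
def fallProd (b x : R) (i : ℕ) : R := ∏ j ∈ range i, (1 - (b - 1 - j) * x)

def centeredSum (b x : R) (d : ℕ) : R := altBinomSum d (fallProd b x)

lemma fallProd_succ (b x : R) (i : ℕ) :
    fallProd b x (i + 1) = fallProd b x i * (1 - (b - 1 - i) * x) :=
  prod_range_succ _ i

lemma centeredSum_succ (b x : R) (e : ℕ) :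
    centeredSum b x (e + 1) = x * altBinomSum e (fun i => (b - 1 - i) * fallProd b x i) := by
  rw [centeredSum, altBinomSum_succ, ← altBinomSum_mul_left]
  congr 1
  funext i
  rw [fallProd_succ]
  ring

lemma altBinomSum_fallProd_shift (b x : R) (e : ℕ) :
    altBinomSum e (fun i => fallProd b x (i + 1))
      = centeredSum b x e - x * altBinomSum e (fun i => (b - 1 - i) * fallProd b x i) := by
  rw [← centeredSum_succ, centeredSum, centeredSum, altBinomSum_succ, altBinomSum_sub]
  ring

lemma altBinomSum_weighted_fallProd_succ (b x : R) (e : ℕ) :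
    altBinomSum (e + 1) (fun i => (b - 1 - i) * fallProd b x i)
      = ((e : R) + 1) * centeredSum b x e
        + (b - 2 - e) * x * altBinomSum e (fun i => (b - 1 - i) * fallProd b x i) := by
  have hsplit : (fun i : ℕ => (b - 1 - i) * fallProd b x i)
      = fun i => (b - 1) * fallProd b x i - (i : R) * fallProd b x i := by
    funext i
    ring
  rw [hsplit, altBinomSum_sub, altBinomSum_mul_left, altBinomSum_succ_natCast_mul,
    altBinomSum_fallProd_shift, ← centeredSum, centeredSum_succ, ← hsplit]
  ring

lemma centeredSum_add_two (b x : R) (d : ℕ) :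
    centeredSum b x (d + 2) = ((d : R) + 1) * x * centeredSum b x d
      + (b - d - 2) * x * centeredSum b x (d + 1) := by
  rw [centeredSum_succ, altBinomSum_weighted_fallProd_succ, centeredSum_succ]
  ring

@[simp] lemma centeredSum_zero (b x : R) : centeredSum b x 0 = 1 := by
  simp [centeredSum, altBinomSum, fallProd]

lemma centeredSum_one (b x : R) : centeredSum b x 1 = (b - 1) * x := by
  simp [centeredSum_succ, altBinomSum, fallProd, mul_comm]

open Polynomial in
lemma exists_centeredSum_eq_pow_mul_eval (b : R) (m : ℕ) :
    ∃ p q : R[X], p.eval 0 = ∏ j ∈ range m, (2 * (j : R) + 1)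
      ∧ (∀ x, centeredSum b x (2 * m) = x ^ m * p.eval x)
      ∧ (∀ x, centeredSum b x (2 * m + 1) = x ^ (m + 1) * q.eval x) := by
  induction m with
  | zero =>
    exact ⟨1, C b - 1, by simp, fun x => by simp, fun x => by simp [centeredSum_one, mul_comm]⟩
  | succ m ih =>
    obtain ⟨p, q, hp0, hp, hq⟩ := ih
    set p' : R[X] := (2 * (m : R[X]) + 1) * p + (C b - (2 * (m : R[X]) + 2)) * X * q
    refine ⟨p', (2 * (m : R[X]) + 2) * q + (C b - (2 * (m : R[X]) + 3)) * p', ?_, ?_, ?_⟩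
    · simp only [p', eval_add, eval_mul, eval_sub, eval_ofNat, eval_natCast, eval_one, eval_C,
        eval_X, hp0, prod_range_succ]
      ring
    · intro x
      rw [show 2 * (m + 1) = 2 * m + 2 by ring, centeredSum_add_two, hp, hq]
      simp only [p', eval_add, eval_mul, eval_sub, eval_ofNat, eval_natCast, eval_one, eval_C,
        eval_X]
      push_cast
      ring
    · intro x
      rw [show 2 * (m + 1) + 1 = (2 * m + 1) + 2 by ring, centeredSum_add_two,
        show 2 * m + 1 + 1 = 2 * m + 2 by ring, centeredSum_add_two, hp, hq]
      simp only [p', eval_add, eval_mul, eval_sub, eval_ofNat, eval_natCast, eval_one, eval_C,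
        eval_X]
      push_cast
      ring

end CenteredSum

section Asymptotics

lemma continuous_fallProd {R : Type*} [CommRing R] [TopologicalSpace R] [IsTopologicalRing R]
    (b : R) (i : ℕ) : Continuous fun x => fallProd b x i := by
  unfold fallProd
  fun_prop

lemma descFactorial_eq_mul_pow_mul_fallProd {N b i : ℕ} (hi : i ≤ b) (hb : b ≤ N) :
    (N.descFactorial b : ℝ)
      = N.descFactorial (b - i) * (N : ℝ) ^ i * fallProd (b : ℝ) (N : ℝ)⁻¹ i := by
  induction i with
  | zero => simp [fallProd]
  | succ i ih =>
    have hN : (N : ℝ) ≠ 0 := by norm_cast; omega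
    have hdesc : (N.descFactorial (b - i) : ℝ)
        = ((N : ℝ) - (b - 1 - i)) * N.descFactorial (b - (i + 1)) := by
      rw [show b - i = b - (i + 1) + 1 by omega, Nat.descFactorial_succ,
        Nat.cast_mul, Nat.cast_sub (by omega), Nat.cast_sub (by omega)]
      push_cast
      ring
    rw [ih (by omega), hdesc, fallProd_succ]
    field_simp
    ring

lemma inv_pow_div_descFactorial_sub {N b i : ℕ} (hi : i ≤ b) (hb : b ≤ N) :
    ((N : ℝ) ^ i)⁻¹ / N.descFactorial (b - i)
      = (N : ℝ)⁻¹ ^ b * fallProd (b : ℝ) (N : ℝ)⁻¹ i / fallProd (b : ℝ) (N : ℝ)⁻¹ b := by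
  have hfull : (N.descFactorial b : ℝ) = (N : ℝ) ^ b * fallProd (b : ℝ) (N : ℝ)⁻¹ b := by
    simpa using descFactorial_eq_mul_pow_mul_fallProd le_rfl hb
  have hsplit := descFactorial_eq_mul_pow_mul_fallProd hi hb
  have hne : (N.descFactorial b : ℝ) ≠ 0 := by exact_mod_cast (Nat.descFactorial_pos.mpr hb).ne'
  obtain ⟨hNb, hQ⟩ := mul_ne_zero_iff.mp (hfull ▸ hne)
  obtain ⟨hD, hNi⟩ := mul_ne_zero_iff.mp (left_ne_zero_of_mul (hsplit ▸ hne))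
  rw [hfull] at hsplit
  generalize fallProd (b : ℝ) (N : ℝ)⁻¹ i = P at *
  generalize fallProd (b : ℝ) (N : ℝ)⁻¹ b = Q at *
  rw [inv_pow]
  field_simp
  linear_combination hsplit

lemma sum_choose_mul_inv_pow_div_descFactorial {N b d : ℕ} (hd : d ≤ b) (hb : b ≤ N) :
    ∑ i ∈ range (d + 1), (d.choose i : ℝ) * (-1) ^ i * (((N : ℝ) ^ i)⁻¹ / N.descFactorial (b - i))
      = (N : ℝ)⁻¹ ^ b * centeredSum (b : ℝ) (N : ℝ)⁻¹ d / fallProd (b : ℝ) (N : ℝ)⁻¹ b := by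
  rw [centeredSum, altBinomSum, mul_sum, sum_div]
  refine sum_congr rfl fun i hi => ?_
  rw [inv_pow_div_descFactorial_sub (by simp at hi; omega) hb]
  ring

lemma tendsto_pow_mul_sum_choose_mul_inv_pow_div_descFactorial {b c m : ℕ} (hcb : c ≤ b)
    (hmb : 2 * m ≤ b) :
    Tendsto (fun N : ℕ => (N : ℝ) ^ (c + m) * ∑ i ∈ range (2 * m + 1),
        ((2 * m).choose i : ℝ) * (-1) ^ i * (((N : ℝ) ^ i)⁻¹ / N.descFactorial (b - i)))
      atTop (𝓝 (if b = c then ∏ j ∈ range m, (2 * (j : ℝ) + 1) else 0)) := by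
  obtain ⟨p, -, hp0, hp, -⟩ := exists_centeredSum_eq_pow_mul_eval (b : ℝ) m
  obtain ⟨r, rfl⟩ := Nat.exists_eq_add_of_le hcb
  set f : ℝ → ℝ := fun x => x ^ r * p.eval x / fallProd ((c + r : ℕ) : ℝ) x (c + r)
  have hf : Tendsto f (𝓝 0) (𝓝 (f 0)) :=
    (((continuous_pow r).mul p.continuous).continuousAt.div
      (continuous_fallProd _ _).continuousAt (by simp [fallProd])).tendsto
  have hf0 : f 0 = if c + r = c then ∏ j ∈ range m, (2 * (j : ℝ) + 1) else 0 := by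
    rcases Nat.eq_zero_or_pos r with rfl | hr
    · simp [f, hp0, fallProd]
    · simp [f, hr.ne']
  rw [← hf0]
  refine (hf.comp tendsto_inv_atTop_nhds_zero_nat).congr' ?_
  filter_upwards [eventually_ge_atTop (c + r + 1)] with N hN
  have hN0 : (N : ℝ) ≠ 0 := by norm_cast; omega
  rw [Function.comp_apply, sum_choose_mul_inv_pow_div_descFactorial hmb (by omega), hp]
  simp only [f, inv_pow]
  generalize fallProd _ (N : ℝ)⁻¹ _ = Q
  field_simp
  ring

end Asymptotics

section Partitions

variable {α : Type*} [Finite α]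

instance instFiniteSetoid : Finite (Setoid α) :=
  Finite.of_injective (fun s : Setoid α => s.r) fun s t h => Setoid.ext fun a b => by
    rw [show s.r = t.r from h]

lemma numBlocks_le_of_le {s t : Setoid α} (h : s ≤ t) :
    numBlocks t ≤ numBlocks s :=
  Nat.card_le_card_of_surjective (Setoid.map_of_le h)
    (Quotient.ind fun a => ⟨Quotient.mk s a, rfl⟩)

lemma eq_of_le_of_numBlocks_le {s t : Setoid α} (h : s ≤ t)
    (hc : numBlocks s ≤ numBlocks t) : s = t := by
  have hbij : Function.Bijective (Setoid.map_of_le h) :=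
    (Nat.bijective_iff_surjective_and_card _).mpr
      ⟨Quotient.ind fun a => ⟨Quotient.mk s a, rfl⟩, le_antisymm hc (numBlocks_le_of_le h)⟩
  exact le_antisymm h fun a b hab => Quotient.exact (hbij.injective (Quotient.sound hab :
    Setoid.map_of_le h (Quotient.mk s a) = Setoid.map_of_le h (Quotient.mk s b)))

lemma numSingletons_le_of_le {k : ℕ} {s t : Setoid (Fin k)} (h : s ≤ t) :
    numSingletons t ≤ numSingletons s := by
  have hsub : {j : Fin k | ∀ m, t j m → m = j} ⊆ {j : Fin k | ∀ m, s j m → m = j} :=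
    fun j hj m hm => hj m (h hm)
  exact Nat.card_le_card_of_injective (Set.inclusion hsub) (Set.inclusion_injective hsub)

lemma numSingletons_le_numBlocks {k : ℕ} (π : Setoid (Fin k)) :
    numSingletons π ≤ numBlocks π :=
  Nat.card_le_card_of_injective (fun j : {j : Fin k | ∀ m, π j m → m = j} => Quotient.mk π j.1)
    fun j j' hjj => Subtype.ext (j'.2 j.1 (Setoid.symm (Quotient.exact hjj)))

end Partitions

lemma cWg_eq_sum (k N : ℕ) (σ τ : Setoid (Fin k)) :
    cWg k N σ τ = ∑ π ∈ (Set.toFinite (Set.Iic (σ ⊓ τ))).toFinset,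
      ((mobius π σ * mobius π τ : ℤ) : ℝ) * ∑ i ∈ range (numSingletons (σ ⊔ τ) + 1),
        ((numSingletons (σ ⊔ τ)).choose i : ℝ) * (-1) ^ i *
          (((N : ℝ) ^ i)⁻¹ / N.descFactorial (numBlocks π - i)) := by
  simp only [cWg, finsum_mem_eq_finite_toFinset_sum _ (Set.toFinite _), mul_sum]
  rw [sum_comm]
  exact sum_congr rfl fun _ _ => sum_congr rfl fun _ _ => by ring

open scoped Classical in
lemma tendsto_pow_mul_cWg_summand {k m : ℕ} {σ τ π : Setoid (Fin k)} (hπ : π ≤ σ ⊓ τ)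
    (hm : numSingletons (σ ⊔ τ) = 2 * m) :
    Tendsto (fun N : ℕ => (N : ℝ) ^ (numBlocks (σ ⊓ τ) + m) *
        (((mobius π σ * mobius π τ : ℤ) : ℝ) * ∑ i ∈ range (2 * m + 1),
          ((2 * m).choose i : ℝ) * (-1) ^ i *
            (((N : ℝ) ^ i)⁻¹ / N.descFactorial (numBlocks π - i))))
      atTop (𝓝 (if π = σ ⊓ τ then
        ((mobius (σ ⊓ τ) σ * mobius (σ ⊓ τ) τ : ℤ) : ℝ) * ∏ j ∈ range m, (2 * (j : ℝ) + 1)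
        else 0)) := by
  have hmb : 2 * m ≤ numBlocks π := hm ▸ (numSingletons_le_of_le
    (hπ.trans (inf_le_left.trans le_sup_left))).trans (numSingletons_le_numBlocks π)
  have hlim := (tendsto_pow_mul_sum_choose_mul_inv_pow_div_descFactorial
    (numBlocks_le_of_le hπ) hmb).const_mul ((mobius π σ * mobius π τ : ℤ) : ℝ)
  simp only [mul_left_comm ((mobius π σ * mobius π τ : ℤ) : ℝ)] at hlim
  by_cases h : π = σ ⊓ τ
  · subst h
    simpa using hlim
  · have hb : numBlocks π ≠ numBlocks (σ ⊓ τ) := fun hb => h (eq_of_le_of_numBlocks_le hπ hb.le)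
    simpa [h, hb] using hlim

theorem stmt14_general (k : ℕ) (σ τ : Setoid (Fin k))
    (hd_even : numSingletons (σ ⊔ τ) % 2 = 0) :
    Filter.Tendsto
      (fun N : ℕ =>
        (N : ℝ) ^ (numBlocks (σ ⊓ τ) + numSingletons (σ ⊔ τ) / 2) * cWg k N σ τ)
      Filter.atTop
      (nhds (((mobius (σ ⊓ τ) σ * mobius (σ ⊓ τ) τ : ℤ) : ℝ) *
        ∏ j ∈ Finset.range (numSingletons (σ ⊔ τ) / 2), (2 * (j : ℝ) + 1))) := by
  obtain ⟨m, hm⟩ : ∃ m, numSingletons (σ ⊔ τ) = 2 * m := ⟨_, (Nat.two_mul_div_two_of_even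
    (Nat.even_iff.mpr hd_even)).symm⟩
  classical
  have hlim := tendsto_finsetSum (Set.toFinite (Set.Iic (σ ⊓ τ))).toFinset fun π hπ =>
    tendsto_pow_mul_cWg_summand (Set.mem_Iic.mp ((Set.Finite.mem_toFinset _).mp hπ)) hm
  rw [sum_ite_eq', if_pos ((Set.Finite.mem_toFinset _).mpr (Set.mem_Iic.mpr le_rfl))] at hlim
  simpa only [cWg_eq_sum, mul_sum, hm, Nat.mul_div_cancel_left m two_pos] using hlim

/-- leading asymptotics of `W̊g_k(σ,τ,N)` when `d = |D(σ∨τ)|` is even, `d ≠ k`. -/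
theorem stmt14 (k : ℕ) (hk : 1 ≤ k) (σ τ : Setoid (Fin k))
    (hd_even : numSingletons (σ ⊔ τ) % 2 = 0) (hd_ne : numSingletons (σ ⊔ τ) ≠ k) :
    Filter.Tendsto
      (fun N : ℕ =>
        (N : ℝ) ^ (numBlocks (σ ⊓ τ) + numSingletons (σ ⊔ τ) / 2) * cWg k N σ τ)
      Filter.atTop
      (nhds (((mobius (σ ⊓ τ) σ * mobius (σ ⊓ τ) τ : ℤ) : ℝ) *
        ∏ j ∈ Finset.range (numSingletons (σ ⊔ τ) / 2), (2 * (j : ℝ) + 1))) :=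
  stmt14_general k σ τ hd_even

end WgPerm

end
end
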